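/- There is a universal constant K > 0 such that for every n ≥ 1 and 0 < ε, δ < 1 and every m ≥ K·(1/ε²)·log(n/(ε·δ)), there exists an estimator f mapping m-tuples of samples in {1,2,3}^n × {0,1}^n to functions {0,1,2,3}^n → ℝ with the following property: for every probability distribution p on {0,1,2,3}^n, if the m samples are i.i.d. pairs (A, A⋆C) with A uniform on {1,2,3}^n and C ~ p independent, then with probability at least 1 − δ the output p̂ = f(samples) satisfies ‖p̂ − p‖_∞ ≤ ε, i.e., |p̂(B) − p(B)| ≤ ε for every B ∈ {0,1,2,3}^n. -/

import Mathlib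

open scoped BigOperators

noncomputable section

/-- Identify `a ∈ {0,1,2,3}` with its base-2 representation `(a₁, a₂) ∈ 𝔽₂²`. -/
def bits (a : Fin 4) : ZMod 2 × ZMod 2 :=
  (((a.val / 2 : ℕ) : ZMod 2), ((a.val % 2 : ℕ) : ZMod 2))

/-- Symplectic product `a ⋆ b = a₁b₂ + a₂b₁ (mod 2)`. -/
def sstar (a b : Fin 4) : ZMod 2 :=
  (bits a).1 * (bits b).2 + (bits a).2 * (bits b).1

/-- Coordinatewise symplectic product `A ⋆ C ∈ {0,1}ⁿ`. -/
def starN {n : ℕ} (A C : Fin n → Fin 4) : Fin n → ZMod 2 :=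
  fun j => sstar (A j) (C j)

/-- View a string in `{1,2,3}ⁿ` as a string in `{0,1,2,3}ⁿ`. -/
def lift3 {n : ℕ} (A : Fin n → Fin 3) : Fin n → Fin 4 := fun j => (A j).succ

/-- The sample distribution `D_p` on `{1,2,3}ⁿ × {0,1}ⁿ`: the law of
`(A, A⋆C)` with `A` uniform on `{1,2,3}ⁿ` and independently `C ~ p`. -/
def sampleDist {n : ℕ} (p : (Fin n → Fin 4) → ℝ)
    (s : (Fin n → Fin 3) × (Fin n → ZMod 2)) : ℝ :=
  ((3 : ℝ) ^ n)⁻¹ * ∑ C : Fin n → Fin 4,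
    (if starN (lift3 s.1) C = s.2 then p C else 0)

namespace PopRec
abbrev Samp (n : ℕ) := (Fin n → Fin 3) × (Fin n → ZMod 2)
def kap (x : Fin 4) (a : Fin 3) (β : ZMod 2) : ℝ :=
  if sstar a.succ x = β then 1 else -(1/2)
lemma abs_kap_le (x : Fin 4) (a : Fin 3) (β : ZMod 2) : |kap x a β| ≤ 1 := by
  unfold kap; split <;> rw [abs_le] <;> constructor <;> norm_num
lemma kap_sum (x c : Fin 4) :
    ∑ a : Fin 3, kap x a (sstar a.succ c) = if x = c then 3 else 0 := by
  fin_cases x <;> fin_cases c <;>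
    simp (config := { decide := true }) [kap, sstar, bits, Fin.sum_univ_three] <;> norm_num

variable {n : ℕ}

/-- Prefix-membership estimator from a single sample. -/
def Xe (j : ℕ) (y : Fin n → Fin 4) (ω : Samp n) : ℝ :=
  ∏ i : Fin n, if (i : ℕ) < j then kap (y i) (ω.1 i) (ω.2 i) else 1

lemma abs_Xe_le_one (j : ℕ) (y : Fin n → Fin 4) (ω : Samp n) : |Xe j y ω| ≤ 1 := by
  rw [Xe, Finset.abs_prod]
  refine Finset.prod_le_one (fun i _ => abs_nonneg _) (fun i _ => ?_)
  split
  · exact abs_kap_le _ _ _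
  · simp

/-- Agreement of `y` and `C` on the first `j` coordinates. -/
def agr (j : ℕ) (y C : Fin n → Fin 4) : Prop := ∀ i : Fin n, (i : ℕ) < j → y i = C i

instance (j : ℕ) (y C : Fin n → Fin 4) : Decidable (agr j y C) := by
  unfold agr; infer_instance

/-- Mass of the prefix cylinder. -/
def rho (p : (Fin n → Fin 4) → ℝ) (j : ℕ) (y : Fin n → Fin 4) : ℝ :=
  ∑ C, if agr j y C then p C else 0

lemma rho_nonneg {p : (Fin n → Fin 4) → ℝ} (hp : ∀ C, 0 ≤ p C) (j : ℕ) (y : Fin n → Fin 4) :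
    0 ≤ rho p j y := by
  refine Finset.sum_nonneg (fun C _ => ?_); split
  · exact hp C
  · exact le_rfl

lemma rho_le_one {p : (Fin n → Fin 4) → ℝ} (hp : ∀ C, 0 ≤ p C) (hp1 : ∑ C, p C = 1)
    (j : ℕ) (y : Fin n → Fin 4) : rho p j y ≤ 1 := by
  rw [← hp1]
  refine Finset.sum_le_sum (fun C _ => ?_)
  split
  · exact le_rfl
  · exact hp C

lemma le_rho {p : (Fin n → Fin 4) → ℝ} (hp : ∀ C, 0 ≤ p C) {j : ℕ} {y B : Fin n → Fin 4}
    (h : agr j y B) : p B ≤ rho p j y := by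
  have := Finset.single_le_sum (f := fun C => if agr j y C then p C else 0)
    (fun C _ => by split; exacts [hp C, le_rfl]) (Finset.mem_univ B)
  simpa [h, rho] using this

/-- The key expectation identity: the estimator is unbiased for the cylinder mass. -/
lemma Xe_exp (p : (Fin n → Fin 4) → ℝ) (j : ℕ) (y : Fin n → Fin 4) :
    ∑ ω : Samp n, sampleDist p ω * Xe j y ω = rho p j y := by
  have step1 : ∀ A : Fin n → Fin 3,
      ∑ b : Fin n → ZMod 2, sampleDist p (A, b) * Xe j y (A, b)
        = ∑ C, p C * ((3:ℝ)^n)⁻¹ * Xe j y (A, starN (lift3 A) C) := by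
    intro A
    have : ∀ b : Fin n → ZMod 2, sampleDist p (A, b) * Xe j y (A, b)
        = ∑ C, (if starN (lift3 A) C = b then p C * ((3:ℝ)^n)⁻¹ * Xe j y (A, b) else 0) := by
      intro b
      rw [sampleDist]
      simp only [Finset.sum_mul, Finset.mul_sum, ite_mul, zero_mul, mul_ite, mul_zero]
      refine Finset.sum_congr rfl (fun C _ => ?_)
      split <;> ring_nf
    rw [Finset.sum_congr rfl (fun b _ => this b), Finset.sum_comm]
    refine Finset.sum_congr rfl (fun C _ => ?_)
    rw [Finset.sum_ite_eq (Finset.univ) (starN (lift3 A) C)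
      (fun b => p C * ((3:ℝ)^n)⁻¹ * Xe j y (A, b))]
    simp
  have step2 : ∀ C : Fin n → Fin 4,
      ∑ A : Fin n → Fin 3, Xe j y (A, starN (lift3 A) C)
        = (3:ℝ)^n * (if agr j y C then 1 else 0) := by
    intro C
    have hXe : ∀ A : Fin n → Fin 3, Xe j y (A, starN (lift3 A) C)
        = ∏ i : Fin n, (fun (i : Fin n) (a : Fin 3) =>
            if (i : ℕ) < j then kap (y i) a (sstar a.succ (C i)) else 1) i (A i) := by
      intro A
      refine Finset.prod_congr rfl (fun i _ => ?_)
      simp [starN, lift3]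
    have hfac := (Fintype.prod_sum (ι := Fin n) (κ := fun _ => Fin 3) (R := ℝ)
      (f := fun (i : Fin n) (a : Fin 3) =>
        if (i : ℕ) < j then kap (y i) a (sstar a.succ (C i)) else 1)).symm
    rw [Finset.sum_congr rfl (fun A _ => hXe A), hfac]
    have : ∀ i : Fin n, (∑ a : Fin 3,
        if (i : ℕ) < j then kap (y i) a (sstar a.succ (C i)) else 1)
        = 3 * (if (i : ℕ) < j then (if y i = C i then (1:ℝ) else 0) else 1) := by
      intro i
      by_cases h : (i : ℕ) < j
      · simp only [h, if_true]
        rw [kap_sum]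
        split <;> norm_num
      · simp [h]
    rw [Finset.prod_congr rfl (fun i _ => this i), Finset.prod_mul_distrib]
    simp only [Finset.prod_const, Finset.card_univ, Fintype.card_fin]
    congr 1
    by_cases h : agr j y C
    · rw [if_pos h]
      exact Finset.prod_eq_one (fun i _ => by
        by_cases hi : (i:ℕ) < j
        · simp [hi, h i hi]
        · simp [hi])
    · rw [if_neg h]
      unfold agr at h
      push_neg at h
      obtain ⟨i0, hi0, hne⟩ := h
      refine Finset.prod_eq_zero (Finset.mem_univ i0) ?_
      simp [hi0, hne]
  calc ∑ ω : Samp n, sampleDist p ω * Xe j y ω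
      = ∑ A : Fin n → Fin 3, ∑ b, sampleDist p (A, b) * Xe j y (A, b) := by
        exact Fintype.sum_prod_type _
    _ = ∑ A : Fin n → Fin 3, ∑ C, p C * ((3:ℝ)^n)⁻¹ * Xe j y (A, starN (lift3 A) C) := by
        exact Finset.sum_congr rfl (fun A _ => step1 A)
    _ = ∑ C, p C * ((3:ℝ)^n)⁻¹ * ((3:ℝ)^n * (if agr j y C then 1 else 0)) := by
        rw [Finset.sum_comm]
        refine Finset.sum_congr rfl (fun C _ => ?_)
        rw [← Finset.mul_sum, step2 C]
    _ = rho p j y := by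
        rw [rho]
        refine Finset.sum_congr rfl (fun C _ => ?_)
        have h3 : ((3:ℝ)^n) ≠ 0 := by positivity
        split <;> field_simp <;> simp

/-- Truncation: zero out coordinates `≥ j`. -/
def trunc (j : ℕ) (y : Fin n → Fin 4) : Fin n → Fin 4 :=
  fun i => if (i : ℕ) < j then y i else 0

lemma trunc_trunc (j : ℕ) (y : Fin n → Fin 4) : trunc j (trunc j y) = trunc j y := by
  funext i; unfold trunc; split <;> simp_all

lemma agr_trunc (j : ℕ) (y : Fin n → Fin 4) : agr j (trunc j y) y := by
  intro i hi; simp [trunc, hi]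

lemma trunc_eq_self {j : ℕ} (h : n ≤ j) (y : Fin n → Fin 4) : trunc j y = y := by
  funext i; have : (i : ℕ) < j := lt_of_lt_of_le i.isLt h
  simp [trunc, this]

lemma trunc_of_trunc_succ (j : ℕ) (y : Fin n → Fin 4) :
    trunc j (trunc (j+1) y) = trunc j y := by
  funext i; unfold trunc
  by_cases hi : (i : ℕ) < j
  · simp [hi, Nat.lt_succ_of_lt hi]
  · simp [hi]

lemma rho_zero {p : (Fin n → Fin 4) → ℝ} (hp1 : ∑ C, p C = 1) (y : Fin n → Fin 4) :
    rho p 0 y = 1 := by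
  rw [rho, ← hp1]
  refine Finset.sum_congr rfl (fun C _ => ?_)
  rw [if_pos]
  intro i hi; exact absurd hi (Nat.not_lt_zero _)

lemma rho_top {p : (Fin n → Fin 4) → ℝ} (B : Fin n → Fin 4) :
    rho p n B = p B := by
  rw [rho]
  rw [Finset.sum_eq_single B]
  · have : agr n B B := fun i _ => rfl
    rw [if_pos this]
  · intro C _ hne
    rw [if_neg]
    intro h
    exact hne (funext fun i => (h i i.isLt).symm)
  · intro h; exact absurd (Finset.mem_univ B) h

/-- The canonical level-`j` strings partition the mass. -/
lemma sum_rho_canon {p : (Fin n → Fin 4) → ℝ} (hp1 : ∑ C, p C = 1) (j : ℕ) :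
    ∑ z ∈ Finset.univ.filter (fun z => trunc j z = z), rho p j z = 1 := by
  rw [← hp1]
  unfold rho
  rw [Finset.sum_filter]
  have hpush : ∀ z : Fin n → Fin 4,
      (if trunc j z = z then ∑ C, (if agr j z C then p C else 0) else 0)
      = ∑ C, (if trunc j z = z then (if agr j z C then p C else 0) else 0) := by
    intro z; split
    · rfl
    · exact Finset.sum_const_zero.symm
  rw [Finset.sum_congr rfl (fun z _ => hpush z), Finset.sum_comm]
  refine Finset.sum_congr rfl (fun C _ => ?_)
  rw [Finset.sum_eq_single (trunc j C)]
  · rw [if_pos (trunc_trunc j C), if_pos (agr_trunc j C)]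
  · intro z _ hne
    by_cases hz : trunc j z = z
    · rw [if_pos hz, if_neg]
      intro hagr
      refine hne ?_
      funext i
      by_cases hi : (i : ℕ) < j
      · rw [← hz]; simp [trunc, hi, hagr i hi]
      · rw [← hz]; simp [trunc, hi]
    · rw [if_neg hz]
  · intro h; exact absurd (Finset.mem_univ _) h


variable {m : ℕ}

/-- Empirical estimate of the cylinder mass from `m` samples. -/
def est (j : ℕ) (y : Fin n → Fin 4) (s : Fin m → Samp n) : ℝ :=
  (m : ℝ)⁻¹ * ∑ i, Xe j y (s i)

/-- The branch-and-prune survival predicate. -/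
def alive (ε : ℝ) (s : Fin m → Samp n) : ℕ → (Fin n → Fin 4) → Prop
  | 0, _ => True
  | (j+1), y => alive ε s j y ∧ ε/2 ≤ est (j+1) (trunc (j+1) y) s

instance (ε : ℝ) (s : Fin m → Samp n) (j : ℕ) (y : Fin n → Fin 4) :
    Decidable (alive ε s j y) := by
  induction j with
  | zero => exact .isTrue trivial
  | succ j ih => rw [alive]; exact @instDecidableAnd _ _ ih _

/-- The estimator. -/
def fhat (ε : ℝ) (s : Fin m → Samp n) (B : Fin n → Fin 4) : ℝ :=
  if alive ε s n B then est n B s else 0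

/-- The good event: all potentially queried estimates are accurate. -/
def GoodEv (ε : ℝ) (p : (Fin n → Fin 4) → ℝ) (s : Fin m → Samp n) : Prop :=
  ∀ j, j < n → ∀ y : Fin n → Fin 4, ε/4 ≤ rho p j (trunc j y) →
    |est (j+1) (trunc (j+1) y) s - rho p (j+1) (trunc (j+1) y)| ≤ ε/4

lemma alive_invariant {ε : ℝ} {p : (Fin n → Fin 4) → ℝ} (hp1 : ∑ C, p C = 1)
    (hε : 0 < ε) (hε4 : ε ≤ 4) {s : Fin m → Samp n} (hG : GoodEv ε p s) :
    ∀ j, j ≤ n → ∀ B, alive ε s j B → ε/4 ≤ rho p j (trunc j B) := by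
  intro j
  induction j with
  | zero =>
    intro _ B _
    rw [rho_zero hp1]
    linarith
  | succ j ih =>
    intro hjn B hal
    rw [alive] at hal
    obtain ⟨hal', hest⟩ := hal
    have hj : j < n := Nat.lt_of_succ_le hjn
    have hro := ih (le_of_lt hj) B hal'
    have hacc := hG j hj B hro
    have := abs_le.mp hacc
    linarith [this.1]

lemma not_alive_exists {ε : ℝ} {s : Fin m → Samp n} {B : Fin n → Fin 4} :
    ∀ k, ¬ alive ε s k B → ∃ j, j < k ∧ alive ε s j B ∧ ¬ alive ε s (j+1) B := by
  intro k
  induction k with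
  | zero => intro h; exact absurd trivial h
  | succ k ih =>
    intro h
    by_cases hk : alive ε s k B
    · exact ⟨k, Nat.lt_succ_self k, hk, h⟩
    · obtain ⟨j, hj, h1, h2⟩ := ih hk
      exact ⟨j, Nat.lt_succ_of_lt hj, h1, h2⟩

/-- On the good event, the estimator is uniformly `ε`-accurate. -/
lemma good_implies {ε : ℝ} {p : (Fin n → Fin 4) → ℝ} (hp : ∀ C, 0 ≤ p C)
    (hp1 : ∑ C, p C = 1) (hε : 0 < ε) (hε4 : ε ≤ 4) (hn : 1 ≤ n)
    {s : Fin m → Samp n} (hG : GoodEv ε p s) :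
    ∀ B, |fhat ε s B - p B| ≤ ε := by
  intro B
  unfold fhat
  split
  · rename_i hal
    obtain ⟨k, hk⟩ : ∃ k, n = k + 1 := ⟨n - 1, (Nat.succ_pred_eq_of_pos hn).symm⟩
    have hal' : alive ε s (k+1) B := hk ▸ hal
    rw [alive] at hal'
    have hro := alive_invariant hp1 hε hε4 hG k (by omega) B hal'.1
    have hacc := hG k (by omega) B hro
    rw [← hk] at hacc
    rw [trunc_eq_self (le_refl n), rho_top] at hacc
    calc |est n B s - p B| ≤ ε/4 := hacc
      _ ≤ ε := by linarith
  · rename_i hal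
    obtain ⟨j, hjn', h1, h2⟩ := not_alive_exists n hal
    have hro := alive_invariant hp1 hε hε4 hG j (le_of_lt hjn') B h1
    have hacc := hG j hjn' B hro
    have hest : ¬ (ε/2 ≤ est (j+1) (trunc (j+1) B) s) := by
      intro hest
      exact h2 ⟨h1, hest⟩
    push_neg at hest
    have hub : rho p (j+1) (trunc (j+1) B) ≤ 3*ε/4 := by
      have := abs_le.mp hacc
      linarith [this.2]
    have hpB : p B ≤ rho p (j+1) (trunc (j+1) B) :=
      le_rho hp (fun i hi => by simp [trunc, hi])
    have h0 : 0 ≤ p B := hp B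
    rw [abs_sub_comm, abs_of_nonneg (by linarith : (0:ℝ) ≤ p B - 0)]
    linarith


lemma exp_le_quad {z : ℝ} (hz : |z| ≤ 1) : Real.exp z ≤ 1 + z + z^2 := by
  have h := Real.exp_bound hz (n := 2) (by norm_num)
  have h2 : ∑ i ∈ Finset.range 2, z ^ i / (Nat.factorial i) = 1 + z := by
    simp [Finset.sum_range_succ]
  rw [h2] at h
  have h3 := (abs_sub_le_iff.mp h).1
  norm_num [Nat.factorial] at h3
  nlinarith [sq_nonneg z, sq_abs z]

/-- Finite one-sided Chernoff bound. -/
lemma chernoff {Ω : Type*} [Fintype Ω] (w : Ω → ℝ) (hw0 : ∀ ω, 0 ≤ w ω)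
    (hw1 : ∑ ω, w ω = 1) (Y : Ω → ℝ) (hY : ∀ ω, |Y ω| ≤ 2)
    (hmean : ∑ ω, w ω * Y ω = 0) (m : ℕ) (a : ℝ) (ha : 0 < a) (ha1 : a ≤ 1) :
    ∑ s : Fin m → Ω, (if (m:ℝ) * a ≤ ∑ i, Y (s i) then ∏ i, w (s i) else 0)
      ≤ Real.exp (-(m * a^2) / 18) := by
  set t : ℝ := a/6 with ht
  have ht0 : 0 < t := by positivity
  -- pointwise bound by the exponential moment
  have hpt : ∀ s : Fin m → Ω,
      (if (m:ℝ) * a ≤ ∑ i, Y (s i) then ∏ i, w (s i) else 0)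
      ≤ Real.exp (-(t * (m * a))) * ∏ i, (w (s i) * Real.exp (t * Y (s i))) := by
    intro s
    have hprod0 : 0 ≤ ∏ i, w (s i) := Finset.prod_nonneg (fun i _ => hw0 _)
    split
    · rename_i hcond
      have : Real.exp (-(t * (m * a))) * ∏ i, (w (s i) * Real.exp (t * Y (s i)))
          = Real.exp (t * (∑ i, Y (s i)) - t * (m * a)) * ∏ i, w (s i) := by
        rw [Finset.prod_mul_distrib, ← Real.exp_sum]
        rw [← Finset.mul_sum]
        rw [sub_eq_add_neg, Real.exp_add]
        ring
      rw [this]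
      have h1le : (1:ℝ) ≤ Real.exp (t * (∑ i, Y (s i)) - t * (m * a)) := by
        rw [Real.one_le_exp_iff]
        have : t * ((m:ℝ) * a) ≤ t * ∑ i, Y (s i) :=
          mul_le_mul_of_nonneg_left hcond (le_of_lt ht0)
        linarith
      nlinarith
    · exact mul_nonneg (Real.exp_pos _).le
        (Finset.prod_nonneg (fun i _ => mul_nonneg (hw0 _) (Real.exp_pos _).le))
  have hsum := Finset.sum_le_sum (fun s (_ : s ∈ Finset.univ) => hpt s)
  refine le_trans hsum ?_
  rw [← Finset.mul_sum]
  have hfac : ∑ s : Fin m → Ω, ∏ i, (w (s i) * Real.exp (t * Y (s i)))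
      = (∑ ω, w ω * Real.exp (t * Y ω)) ^ m := by
    rw [Fintype.sum_pow (f := fun ω => w ω * Real.exp (t * Y ω)) m]
  rw [hfac]
  -- bound the mgf
  have hM : ∑ ω, w ω * Real.exp (t * Y ω) ≤ 1 + 4 * t^2 := by
    have hterm : ∀ ω, w ω * Real.exp (t * Y ω)
        ≤ w ω * (1 + t * Y ω + (t * Y ω)^2) := by
      intro ω
      refine mul_le_mul_of_nonneg_left ?_ (hw0 ω)
      refine exp_le_quad ?_
      rw [abs_mul]
      calc |t| * |Y ω| ≤ (1/6) * 2 := by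
            refine mul_le_mul ?_ (hY ω) (abs_nonneg _) (by norm_num)
            rw [abs_of_pos ht0, ht]; linarith
        _ ≤ 1 := by norm_num
    refine le_trans (Finset.sum_le_sum (fun ω _ => hterm ω)) ?_
    have hexpand : ∀ ω, w ω * (1 + t * Y ω + (t * Y ω)^2)
        = w ω + t * (w ω * Y ω) + t^2 * (w ω * Y ω ^ 2) := by
      intro ω; ring
    rw [Finset.sum_congr rfl (fun ω _ => hexpand ω)]
    rw [Finset.sum_add_distrib, Finset.sum_add_distrib, ← Finset.mul_sum, ← Finset.mul_sum]
    rw [hw1, hmean, mul_zero]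
    have hY2 : ∑ ω, w ω * Y ω ^ 2 ≤ 4 := by
      calc ∑ ω, w ω * Y ω ^ 2 ≤ ∑ ω, w ω * 4 := by
            refine Finset.sum_le_sum (fun ω _ => ?_)
            refine mul_le_mul_of_nonneg_left ?_ (hw0 ω)
            have := hY ω
            nlinarith [abs_nonneg (Y ω), sq_abs (Y ω)]
        _ = 4 := by rw [← Finset.sum_mul, hw1]; ring
    nlinarith [sq_nonneg t]
  have hM0 : 0 ≤ ∑ ω, w ω * Real.exp (t * Y ω) :=
    Finset.sum_nonneg (fun ω _ => mul_nonneg (hw0 ω) (Real.exp_pos _).le)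
  have hpow : (∑ ω, w ω * Real.exp (t * Y ω)) ^ m ≤ Real.exp (4 * t^2 * m) := by
    calc (∑ ω, w ω * Real.exp (t * Y ω)) ^ m ≤ (1 + 4*t^2) ^ m :=
          pow_le_pow_left₀ hM0 hM m
      _ ≤ (Real.exp (4*t^2)) ^ m := by
          refine pow_le_pow_left₀ (by positivity) ?_ m
          linarith [Real.add_one_le_exp (4*t^2)]
      _ = Real.exp (4 * t^2 * m) := by
          rw [← Real.exp_nat_mul]; ring_nf
  calc Real.exp (-(t * (m*a))) * (∑ ω, w ω * Real.exp (t * Y ω)) ^ m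
      ≤ Real.exp (-(t * (m*a))) * Real.exp (4 * t^2 * m) :=
        mul_le_mul_of_nonneg_left hpow (Real.exp_pos _).le
    _ = Real.exp (4 * t^2 * m - t * (m*a)) := by
        rw [← Real.exp_add]; ring_nf
    _ ≤ Real.exp (-(m * a^2) / 18) := by
        rw [Real.exp_le_exp, ht]
        have hm : (0:ℝ) ≤ (m:ℕ) := Nat.cast_nonneg m
        nlinarith [sq_nonneg a, Nat.cast_nonneg (α := ℝ) m]


lemma sampleDist_nonneg {p : (Fin n → Fin 4) → ℝ} (hp : ∀ C, 0 ≤ p C) (ω : Samp n) :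
    0 ≤ sampleDist p ω := by
  refine mul_nonneg (by positivity) (Finset.sum_nonneg (fun C _ => ?_))
  split
  · exact hp C
  · exact le_rfl

lemma Xe_zero (y : Fin n → Fin 4) (ω : Samp n) : Xe 0 y ω = 1 := by
  refine Finset.prod_eq_one (fun i _ => ?_)
  simp

lemma sampleDist_sum_one {p : (Fin n → Fin 4) → ℝ} (hp1 : ∑ C, p C = 1) :
    ∑ ω : Samp n, sampleDist p ω = 1 := by
  have h := Xe_exp p 0 (fun _ => (0 : Fin 4))
  rw [rho_zero hp1] at h
  rw [← h]
  refine Finset.sum_congr rfl (fun ω _ => ?_)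
  rw [Xe_zero, mul_one]

/-- Two-sided deviation bound for the empirical estimate of one cylinder. -/
lemma chernoff_est {p : (Fin n → Fin 4) → ℝ} (hp : ∀ C, 0 ≤ p C)
    (hp1 : ∑ C, p C = 1) {m : ℕ} (hm : 0 < m) {ε : ℝ} (hε : 0 < ε) (hε4 : ε ≤ 4)
    (j : ℕ) (y : Fin n → Fin 4) :
    ∑ s : Fin m → Samp n,
        (if ε/4 < |est j y s - rho p j y| then ∏ i, sampleDist p (s i) else 0)
      ≤ 2 * Real.exp (-(m * (ε/4)^2) / 18) := by
  set w := sampleDist p with hw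
  set ρ := rho p j y with hρ
  set Y : Samp n → ℝ := fun ω => Xe j y ω - ρ with hYdef
  have hw0 : ∀ ω, 0 ≤ w ω := fun ω => sampleDist_nonneg hp ω
  have hw1 : ∑ ω, w ω = 1 := sampleDist_sum_one hp1
  have hρ0 : 0 ≤ ρ := rho_nonneg hp j y
  have hρ1 : ρ ≤ 1 := rho_le_one hp hp1 j y
  have hY : ∀ ω, |Y ω| ≤ 2 := by
    intro ω
    have h1 := abs_Xe_le_one j y ω
    rw [hYdef]
    rw [abs_le] at h1 ⊢
    constructor <;> simp only <;> linarith [h1.1, h1.2]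
  have hYn : ∀ ω, |(-Y) ω| ≤ 2 := by
    intro ω; rw [Pi.neg_apply, abs_neg]; exact hY ω
  have hmean : ∑ ω, w ω * Y ω = 0 := by
    have hexp := Xe_exp p j y
    calc ∑ ω, w ω * Y ω = (∑ ω, w ω * Xe j y ω) - (∑ ω, w ω) * ρ := by
          rw [Finset.sum_mul, ← Finset.sum_sub_distrib]
          refine Finset.sum_congr rfl (fun ω _ => ?_)
          rw [hYdef]; ring
      _ = 0 := by rw [hexp, hw1, ← hρ]; ring
  have hmeann : ∑ ω, w ω * (-Y) ω = 0 := by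
    rw [← neg_eq_zero, ← hmean, ← Finset.sum_neg_distrib]
    refine Finset.sum_congr rfl (fun ω _ => ?_)
    rw [Pi.neg_apply]; ring
  have ha : (0:ℝ) < ε/4 := by linarith
  have ha1 : ε/4 ≤ 1 := by linarith
  have hptw : ∀ s : Fin m → Samp n,
      (if ε/4 < |est j y s - ρ| then ∏ i, w (s i) else 0)
      ≤ (if (m:ℝ) * (ε/4) ≤ ∑ i, Y (s i) then ∏ i, w (s i) else 0)
        + (if (m:ℝ) * (ε/4) ≤ ∑ i, (-Y) (s i) then ∏ i, w (s i) else 0) := by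
    intro s
    have hL0 : 0 ≤ ∏ i, w (s i) := Finset.prod_nonneg (fun i _ => hw0 _)
    by_cases hc : ε/4 < |est j y s - ρ|
    · rw [if_pos hc]
      have hdiff : est j y s - ρ = (m:ℝ)⁻¹ * ∑ i, Y (s i) := by
        rw [est, hYdef]
        rw [Finset.sum_sub_distrib]
        rw [Finset.sum_const, Finset.card_univ, Fintype.card_fin, nsmul_eq_mul]
        rw [mul_sub]
        have : (m:ℝ)⁻¹ * ((m:ℝ) * ρ) = ρ := by
          field_simp
        rw [this]
      rw [hdiff] at hc
      have hmpos : (0:ℝ) < m := Nat.cast_pos.mpr hm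
      have habs : (m:ℝ) * (ε/4) < |∑ i, Y (s i)| := by
        rw [abs_mul, abs_of_pos (inv_pos.mpr hmpos)] at hc
        calc (m:ℝ) * (ε/4) < (m:ℝ) * ((m:ℝ)⁻¹ * |∑ i, Y (s i)|) := by
              exact mul_lt_mul_of_pos_left hc hmpos
          _ = |∑ i, Y (s i)| := by field_simp
      have hsumneg : ∑ i, (-Y) (s i) = -∑ i, Y (s i) := by
        rw [← Finset.sum_neg_distrib]
        exact Finset.sum_congr rfl (fun i _ => rfl)
      have hL1 : 0 ≤ (if (m:ℝ) * (ε/4) ≤ ∑ i, Y (s i) then ∏ i, w (s i) else 0) := by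
        split; exacts [hL0, le_rfl]
      have hL2 : 0 ≤ (if (m:ℝ) * (ε/4) ≤ ∑ i, (-Y) (s i) then ∏ i, w (s i) else 0) := by
        split; exacts [hL0, le_rfl]
      rcases abs_cases (∑ i, Y (s i)) with ⟨heq, _⟩ | ⟨heq, _⟩
      · rw [heq] at habs
        rw [if_pos (le_of_lt habs)]
        linarith
      · rw [heq] at habs
        have : (m:ℝ) * (ε/4) ≤ ∑ i, (-Y) (s i) := by
          rw [hsumneg]; linarith
        rw [if_pos this]
        linarith
    · rw [if_neg hc]
      have : 0 ≤ (if (m:ℝ) * (ε/4) ≤ ∑ i, Y (s i) then ∏ i, w (s i) else 0) := by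
        split; exacts [hL0, le_rfl]
      have h2 : 0 ≤ (if (m:ℝ) * (ε/4) ≤ ∑ i, (-Y) (s i) then ∏ i, w (s i) else 0) := by
        split; exacts [hL0, le_rfl]
      linarith
  calc ∑ s : Fin m → Samp n, (if ε/4 < |est j y s - ρ| then ∏ i, w (s i) else 0)
      ≤ ∑ s : Fin m → Samp n,
          ((if (m:ℝ) * (ε/4) ≤ ∑ i, Y (s i) then ∏ i, w (s i) else 0)
           + (if (m:ℝ) * (ε/4) ≤ ∑ i, (-Y) (s i) then ∏ i, w (s i) else 0)) :=
        Finset.sum_le_sum (fun s _ => hptw s)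
    _ = (∑ s : Fin m → Samp n, (if (m:ℝ) * (ε/4) ≤ ∑ i, Y (s i) then ∏ i, w (s i) else 0))
        + ∑ s : Fin m → Samp n, (if (m:ℝ) * (ε/4) ≤ ∑ i, (-Y) (s i) then ∏ i, w (s i) else 0) :=
        Finset.sum_add_distrib
    _ ≤ Real.exp (-(m * (ε/4)^2) / 18) + Real.exp (-(m * (ε/4)^2) / 18) := by
        refine add_le_add ?_ ?_
        · exact chernoff w hw0 hw1 Y hY hmean m (ε/4) ha ha1
        · exact chernoff w hw0 hw1 (-Y) hYn hmeann m (ε/4) ha ha1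
    _ = 2 * Real.exp (-(m * (ε/4)^2) / 18) := by ring


open scoped Classical in
/-- Union bound: probability that some relevant estimate is inaccurate. -/
lemma bad_prob {p : (Fin n → Fin 4) → ℝ} (hp : ∀ C, 0 ≤ p C)
    (hp1 : ∑ C, p C = 1) {m : ℕ} (hm : 0 < m) {ε : ℝ} (hε : 0 < ε) (hε4 : ε ≤ 4) :
    ∑ s : Fin m → Samp n,
        (if ¬ GoodEv ε p s then ∏ i, sampleDist p (s i) else 0)
      ≤ ((n : ℝ) * (16 / ε)) * (2 * Real.exp (-(m * (ε/4)^2) / 18)) := by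
  set L : (Fin m → Samp n) → ℝ := fun s => ∏ i, sampleDist p (s i) with hL
  have hL0 : ∀ s, 0 ≤ L s := fun s =>
    Finset.prod_nonneg (fun i _ => sampleDist_nonneg hp _)
  set T : Finset (ℕ × (Fin n → Fin 4)) :=
    (Finset.range n).biUnion (fun j =>
      ((Finset.univ.filter (fun y : Fin n → Fin 4 => ε/4 ≤ rho p j (trunc j y))).image
        (fun y => (j, trunc (j+1) y)))) with hT
  -- pointwise union bound
  have hptw : ∀ s : Fin m → Samp n,
      (if ¬ GoodEv ε p s then L s else 0)
      ≤ ∑ q ∈ T, (if ε/4 < |est (q.1+1) q.2 s - rho p (q.1+1) q.2| then L s else 0) := by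
    intro s
    have hterm0 : ∀ q ∈ T,
        0 ≤ (if ε/4 < |est (q.1+1) q.2 s - rho p (q.1+1) q.2| then L s else 0) := by
      intro q _; split; exacts [hL0 s, le_rfl]
    split
    · rename_i hbad
      unfold GoodEv at hbad
      push_neg at hbad
      obtain ⟨j, hj, y, hrho, hbad2⟩ := hbad
      have hmem : (j, trunc (j+1) y) ∈ T := by
        rw [hT]
        refine Finset.mem_biUnion.mpr ⟨j, Finset.mem_range.mpr hj, ?_⟩
        exact Finset.mem_image.mpr ⟨y, Finset.mem_filter.mpr ⟨Finset.mem_univ y, hrho⟩, rfl⟩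
      have := Finset.single_le_sum hterm0 hmem
      simpa [hbad2] using this
    · exact Finset.sum_nonneg hterm0
  -- counting
  have hcard : (T.card : ℝ) ≤ (n : ℝ) * (16 / ε) := by
    have hbiu := Finset.card_biUnion_le (s := Finset.range n)
      (t := fun j => ((Finset.univ.filter
        (fun y : Fin n → Fin 4 => ε/4 ≤ rho p j (trunc j y))).image
          (fun y => (j, trunc (j+1) y))))
    have hjcard : ∀ j, j < n →
        (((Finset.univ.filter (fun y : Fin n → Fin 4 => ε/4 ≤ rho p j (trunc j y))).image
          (fun y => (j, trunc (j+1) y))).card : ℝ) ≤ 16 / ε := by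
      intro j hjn
      set Sj : Finset (Fin n → Fin 4) :=
        Finset.univ.filter (fun z => trunc j z = z ∧ ε/4 ≤ rho p j z) with hSj
      -- injective map into Sj ×ˢ univ
      have hinj : (((Finset.univ.filter
          (fun y : Fin n → Fin 4 => ε/4 ≤ rho p j (trunc j y))).image
            (fun y => (j, trunc (j+1) y))).card)
          ≤ (Sj ×ˢ (Finset.univ : Finset (Fin 4))).card := by
        refine Finset.card_le_card_of_injOn
          (fun q => (trunc j q.2, q.2 ⟨j, hjn⟩)) ?_ ?_
        · intro q hq
          obtain ⟨y, hy, rfl⟩ := Finset.mem_image.mp hq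
          have hy2 := (Finset.mem_filter.mp hy).2
          refine Finset.mem_product.mpr ⟨?_, Finset.mem_univ _⟩
          rw [hSj]
          refine Finset.mem_filter.mpr ⟨Finset.mem_univ _, ?_, ?_⟩
          · show trunc j (trunc j (trunc (j+1) y)) = trunc j (trunc (j+1) y)
            rw [trunc_trunc]
          · show ε/4 ≤ rho p j (trunc j (trunc (j+1) y))
            rw [trunc_of_trunc_succ]; exact hy2
        · intro q hq q' hq' heq
          obtain ⟨y, hy, rfl⟩ := Finset.mem_image.mp hq
          obtain ⟨y', hy', rfl⟩ := Finset.mem_image.mp hq'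
          have h1 : trunc j (trunc (j+1) y) = trunc j (trunc (j+1) y') :=
            congrArg Prod.fst heq
          have h2 : (trunc (j+1) y) ⟨j, hjn⟩ = (trunc (j+1) y') ⟨j, hjn⟩ :=
            congrArg Prod.snd heq
          have h3 : trunc (j+1) y = trunc (j+1) y' := by
            funext i
            rcases lt_trichotomy (i : ℕ) j with hi | hi | hi
            · have := congrFun h1 i
              simpa [trunc, hi, Nat.lt_succ_of_lt hi] using this
            · have hieq : i = ⟨j, hjn⟩ := Fin.ext hi
              rw [hieq]
              exact h2
            · have hnot : ¬ ((i:ℕ) < j + 1) := by omega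
              simp [trunc, hnot]
          rw [h3]
      have hScard : (Sj.card : ℝ) ≤ 4 / ε := by
        have hsum : (Sj.card : ℝ) * (ε/4) ≤ 1 := by
          have h1 : ∑ z ∈ Sj, (ε/4) ≤ ∑ z ∈ Sj, rho p j z :=
            Finset.sum_le_sum (fun z hz => (Finset.mem_filter.mp hz).2.2)
          have h2 : ∑ z ∈ Sj, rho p j z
              ≤ ∑ z ∈ Finset.univ.filter (fun z => trunc j z = z), rho p j z := by
            refine Finset.sum_le_sum_of_subset_of_nonneg ?_
              (fun z _ _ => rho_nonneg hp j z)
            intro z hz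
            exact Finset.mem_filter.mpr
              ⟨Finset.mem_univ _, (Finset.mem_filter.mp hz).2.1⟩
          rw [Finset.sum_const, nsmul_eq_mul] at h1
          rw [sum_rho_canon hp1 j] at h2
          linarith
        rw [le_div_iff₀ hε]
        linarith
      calc (((Finset.univ.filter
          (fun y : Fin n → Fin 4 => ε/4 ≤ rho p j (trunc j y))).image
            (fun y => (j, trunc (j+1) y))).card : ℝ)
          ≤ ((Sj ×ˢ (Finset.univ : Finset (Fin 4))).card : ℝ) := Nat.cast_le.mpr hinj
        _ = (Sj.card : ℝ) * 4 := by
            rw [Finset.card_product, Finset.card_univ, Fintype.card_fin]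
            push_cast; ring
        _ ≤ (4/ε) * 4 := by nlinarith
        _ = 16 / ε := by ring
    calc (T.card : ℝ) ≤ ((∑ j ∈ Finset.range n,
          ((Finset.univ.filter
            (fun y : Fin n → Fin 4 => ε/4 ≤ rho p j (trunc j y))).image
              (fun y => (j, trunc (j+1) y))).card : ℕ) : ℝ) := by
          exact_mod_cast Nat.cast_le.mpr hbiu
      _ = ∑ j ∈ Finset.range n, (((Finset.univ.filter
            (fun y : Fin n → Fin 4 => ε/4 ≤ rho p j (trunc j y))).image
              (fun y => (j, trunc (j+1) y))).card : ℝ) := by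
          push_cast; rfl
      _ ≤ ∑ j ∈ Finset.range n, 16/ε :=
          Finset.sum_le_sum (fun j hj => hjcard j (Finset.mem_range.mp hj))
      _ = (n:ℝ) * (16/ε) := by
          rw [Finset.sum_const, Finset.card_range, nsmul_eq_mul]
  -- put it together
  calc ∑ s : Fin m → Samp n, (if ¬ GoodEv ε p s then L s else 0)
      ≤ ∑ s : Fin m → Samp n, ∑ q ∈ T,
          (if ε/4 < |est (q.1+1) q.2 s - rho p (q.1+1) q.2| then L s else 0) :=
        Finset.sum_le_sum (fun s _ => hptw s)
    _ = ∑ q ∈ T, ∑ s : Fin m → Samp n,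
          (if ε/4 < |est (q.1+1) q.2 s - rho p (q.1+1) q.2| then L s else 0) :=
        Finset.sum_comm
    _ ≤ ∑ q ∈ T, 2 * Real.exp (-(m * (ε/4)^2) / 18) :=
        Finset.sum_le_sum (fun q _ => chernoff_est hp hp1 hm hε hε4 (q.1+1) q.2)
    _ = (T.card : ℝ) * (2 * Real.exp (-(m * (ε/4)^2) / 18)) := by
        rw [Finset.sum_const, nsmul_eq_mul]
    _ ≤ ((n : ℝ) * (16 / ε)) * (2 * Real.exp (-(m * (ε/4)^2) / 18)) := by
        have hE : 0 ≤ 2 * Real.exp (-(m * (ε/4)^2) / 18) := by positivity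
        nlinarith


lemma sum_prod_sampleDist {p : (Fin n → Fin 4) → ℝ} (hp1 : ∑ C, p C = 1) (m : ℕ) :
    ∑ s : Fin m → Samp n, ∏ i, sampleDist p (s i) = 1 := by
  have h := (Fintype.sum_pow (f := fun ω : Samp n => sampleDist p ω) m).symm
  rw [h, sampleDist_sum_one hp1, one_pow]

end PopRec

open PopRec

/-- statistical content of Theorem 1: there is a universal
`K > 0` such that for every `n ≥ 1`, `0 < ε, δ < 1` and
`m ≥ K (1/ε²) log(n/(εδ))` there is an estimator `f` from `m` samples to
hypothesis functions such that, for every distribution `p`, on i.i.d.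
samples from `D_p` the output satisfies `‖p̂ − p‖_∞ ≤ ε` with probability
at least `1 − δ`. -/
theorem population_recovery :
    ∃ K : ℝ, 0 < K ∧
      ∀ n : ℕ, 1 ≤ n →
        ∀ ε δ : ℝ, 0 < ε → ε < 1 → 0 < δ → δ < 1 →
          ∀ m : ℕ, (m : ℝ) ≥ K * (1 / ε ^ 2) * Real.log (n / (ε * δ)) →
            ∃ f : (Fin m → (Fin n → Fin 3) × (Fin n → ZMod 2)) →
                ((Fin n → Fin 4) → ℝ),
              ∀ p : (Fin n → Fin 4) → ℝ,
                (∀ C, 0 ≤ p C) → (∑ C, p C = 1) →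
                (∑ s : Fin m → (Fin n → Fin 3) × (Fin n → ZMod 2),
                    (if ∀ B, |f s B - p B| ≤ ε then
                      ∏ i, sampleDist p (s i) else 0)) ≥ 1 - δ := by
  classical
  refine ⟨2000, by norm_num, ?_⟩
  intro n hn ε δ hε hε1 hδ hδ1 m hm
  by_cases hhalf : (1:ℝ)/2 < ε
  · -- trivial constant estimator suffices for ε > 1/2
    refine ⟨fun _ _ => 1/2, ?_⟩
    intro p hp0 hp1
    have hevent : ∀ s : Fin m → Samp n, ∀ B, |(1:ℝ)/2 - p B| ≤ ε := by
      intro s B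
      have h0 := hp0 B
      have h1 : p B ≤ 1 := by
        rw [← hp1]
        exact Finset.single_le_sum (fun C _ => hp0 C) (Finset.mem_univ B)
      rw [abs_le]; constructor <;> linarith
    have : ∑ s : Fin m → Samp n,
        (if ∀ B, |(1:ℝ)/2 - p B| ≤ ε then ∏ i, sampleDist p (s i) else 0)
        = ∑ s : Fin m → Samp n, ∏ i, sampleDist p (s i) := by
      refine Finset.sum_congr rfl (fun s _ => ?_)
      rw [if_pos (hevent s)]
    rw [this, sum_prod_sampleDist hp1 m]
    linarith
  · -- main branch: branch-and-prune estimator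
    have hε2 : ε ≤ 1/2 := not_lt.mp hhalf
    have hε4 : ε ≤ 4 := by linarith
    set Lg := Real.log ((n:ℝ)/(ε*δ)) with hLg
    have hncast : (1:ℝ) ≤ (n:ℝ) := by exact_mod_cast hn
    have hεδ : 0 < ε * δ := mul_pos hε hδ
    have hεδhalf : ε * δ ≤ 1/2 := by nlinarith
    have hquot2 : (2:ℝ) ≤ (n:ℝ)/(ε*δ) := by
      rw [le_div_iff₀ hεδ]
      nlinarith
    have hquotpos : (0:ℝ) < (n:ℝ)/(ε*δ) := by linarith
    have hL2 : Real.log 2 ≤ Lg := by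
      rw [hLg]
      exact Real.log_le_log (by norm_num) hquot2
    have hlog2pos : (0:ℝ) < Real.log 2 := Real.log_pos (by norm_num)
    have hLgpos : 0 < Lg := lt_of_lt_of_le hlog2pos hL2
    have hmpos : 0 < m := by
      by_contra hm0
      push_neg at hm0
      interval_cases m
      have : (0:ℝ) ≥ 2000 * (1/ε^2) * Lg := by exact_mod_cast hm
      have hpos : 0 < 2000 * (1/ε^2) * Lg := by positivity
      linarith
    refine ⟨fun s => fhat ε s, ?_⟩
    intro p hp0 hp1
    set L : (Fin m → Samp n) → ℝ := fun s => ∏ i, sampleDist p (s i) with hLdef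
    have hL0 : ∀ s, 0 ≤ L s := fun s =>
      Finset.prod_nonneg (fun i _ => sampleDist_nonneg hp0 _)
    -- pointwise comparison with the good event
    have hptw : ∀ s : Fin m → Samp n,
        (if GoodEv ε p s then L s else 0)
        ≤ (if ∀ B, |fhat ε s B - p B| ≤ ε then L s else 0) := by
      intro s
      by_cases hg : GoodEv ε p s
      · rw [if_pos hg, if_pos (good_implies hp0 hp1 hε hε4 hn hg)]
      · rw [if_neg hg]
        split; exacts [hL0 s, le_rfl]
    -- split total mass
    have hsplit : ∑ s : Fin m → Samp n, (if GoodEv ε p s then L s else 0)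
        = 1 - ∑ s : Fin m → Samp n, (if ¬ GoodEv ε p s then L s else 0) := by
      have h1 : ∀ s : Fin m → Samp n,
          (if GoodEv ε p s then L s else 0) + (if ¬ GoodEv ε p s then L s else 0) = L s := by
        intro s
        by_cases hg : GoodEv ε p s <;> simp [hg]
      have h2 := Finset.sum_congr rfl (fun s (_ : s ∈ Finset.univ) => h1 s)
      rw [Finset.sum_add_distrib] at h2
      have h3 : ∑ s : Fin m → Samp n, L s = 1 := sum_prod_sampleDist hp1 m
      rw [h3] at h2
      linarith
    -- the numeric bound
    have hbad := bad_prob (n := n) hp0 hp1 hmpos hε hε4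
    have hnum : ((n : ℝ) * (16 / ε)) * (2 * Real.exp (-(m * (ε/4)^2) / 18)) ≤ δ := by
      set x : ℝ := (m * (ε/4)^2) / 18 with hx
      have hε2pos : (0:ℝ) < ε^2 := by positivity
      have hme2 : 2000 * Lg ≤ (m:ℝ) * ε^2 := by
        have h1 : 2000 * (1/ε^2) * Lg * ε^2 ≤ (m:ℝ) * ε^2 :=
          mul_le_mul_of_nonneg_right hm hε2pos.le
        have h2 : 2000 * (1/ε^2) * Lg * ε^2 = 2000 * Lg := by
          field_simp
        linarith
      have hx' : x = (m:ℝ) * ε^2 / 288 := by rw [hx]; ring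
      have hxLg : 6 * Lg ≤ x := by
        rw [hx']
        linarith
      have hxge : Lg - x ≤ -(5 * Real.log 2) := by linarith
      have hexp32 : Real.exp (-(5 * Real.log 2)) = 1/32 := by
        rw [show (5:ℝ) * Real.log 2 = Real.log (2^5) by
          rw [Real.log_pow]; push_cast; ring]
        rw [Real.exp_neg, Real.exp_log (by norm_num)]
        norm_num
      have hquot : (n:ℝ)/(ε*δ) = Real.exp Lg := (Real.exp_log hquotpos).symm
      have hnε : (n:ℝ)/ε = ((n:ℝ)/(ε*δ)) * δ := by
        field_simp
      have harg : -((m:ℝ) * (ε/4)^2) / 18 = -x := by rw [hx]; ring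
      rw [harg]
      calc ((n : ℝ) * (16 / ε)) * (2 * Real.exp (-x))
          = 32 * ((n:ℝ)/ε) * Real.exp (-x) := by ring
        _ = 32 * δ * (Real.exp Lg * Real.exp (-x)) := by
            rw [hnε, hquot]; ring
        _ = 32 * δ * Real.exp (Lg - x) := by
            rw [← Real.exp_add, ← sub_eq_add_neg]
        _ ≤ 32 * δ * Real.exp (-(5 * Real.log 2)) := by
            have := Real.exp_le_exp.mpr hxge
            nlinarith [Real.exp_pos (Lg - x)]
        _ = δ := by rw [hexp32]; ring
    calc ∑ s : Fin m → Samp n,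
          (if ∀ B, |fhat ε s B - p B| ≤ ε then ∏ i, sampleDist p (s i) else 0)
        ≥ ∑ s : Fin m → Samp n, (if GoodEv ε p s then L s else 0) :=
          Finset.sum_le_sum (fun s _ => hptw s)
      _ = 1 - ∑ s : Fin m → Samp n, (if ¬ GoodEv ε p s then L s else 0) := hsplit
      _ ≥ 1 - δ := by
          have := le_trans hbad hnum
          linarith
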